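/- arXiv:1607.03741 — 3 statements merged into one kernel-verified Lean document; each statement's English description precedes it below -/
import Mathlib

section
/- Let f : ℂⁿ → ℂ be a smooth function of (z, z̄) with real and imaginary parts g and h. The real gradients dg(z₀) and dh(z₀) in ℝ^{2n} are linearly dependent over ℝ if and only if there exists a complex number λ with |λ| = 1 such that the conjugate of the holomorphic Wirtinger gradient equals λ times the antiholomorphic Wirtinger gradient: conj(∂f(z₀)) = λ · ∂̄f(z₀). -/
open Complex ComplexConjugate

/-- Holomorphic Wirtinger gradient `∂u(z) ∈ ℂⁿ`: `∂u/∂zᵢ = (1/2)(∂u/∂xᵢ − √-1 ∂u/∂yᵢ)`. -/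
noncomputable def wD {n : ℕ} (u : (Fin n → ℂ) → ℂ) (z : Fin n → ℂ) : Fin n → ℂ :=
  fun i => (1 / 2 : ℂ) *
    (fderiv ℝ u z (Pi.single i 1) - Complex.I * fderiv ℝ u z (Pi.single i Complex.I))

/-- Antiholomorphic Wirtinger gradient `∂̄u(z) ∈ ℂⁿ`: `∂u/∂z̄ᵢ = (1/2)(∂u/∂xᵢ + √-1 ∂u/∂yᵢ)`. -/
noncomputable def wDbar {n : ℕ} (u : (Fin n → ℂ) → ℂ) (z : Fin n → ℂ) : Fin n → ℂ :=
  fun i => (1 / 2 : ℂ) *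
    (fderiv ℝ u z (Pi.single i 1) + Complex.I * fderiv ℝ u z (Pi.single i Complex.I))

/-- A real-linear functional on `ℂⁿ` vanishing on the real basis vectors `eᵢ`, `i eᵢ`
is zero. -/
lemma aux_ext {n : ℕ} (T : (Fin n → ℂ) →L[ℝ] ℝ)
    (h1 : ∀ i, T (Pi.single i 1) = 0) (h2 : ∀ i, T (Pi.single i Complex.I) = 0) :
    T = 0 := by
  ext z
  have hz : z = ∑ i, ((z i).re • (Pi.single i (1:ℂ) : Fin n → ℂ)
      + (z i).im • (Pi.single i Complex.I : Fin n → ℂ)) := by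
    funext j
    simp only [Finset.sum_apply, Pi.add_apply, Pi.smul_apply, Pi.single_apply]
    rw [Finset.sum_eq_single j]
    · simp [Complex.real_smul, Complex.re_add_im]
    · intro b _ hb; simp [Ne.symm hb]
    · simp
  rw [hz, map_sum]
  simp [h1, h2]

/-- Key algebraic identity for the forward direction. -/
lemma aux_fwd (w v : ℂ) (α β : ℝ) (hμ : (α:ℂ) + β*Complex.I ≠ 0)
    (hw : α*w.re + β*w.im = 0) (hv : α*v.re + β*v.im = 0) :
    conj ((1/2:ℂ)*(w - Complex.I*v)) =
      (-(conj ((α:ℂ)+β*Complex.I))/((α:ℂ)+β*Complex.I)) * ((1/2:ℂ)*(w + Complex.I*v)) := by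
  apply mul_left_cancel₀ hμ
  field_simp
  apply Complex.ext
  · simp [mul_re, mul_im, map_ofNat]; linear_combination 2*hw
  · simp [mul_re, mul_im, map_ofNat]; linear_combination 2*hv

/-- Key algebraic identity for the backward direction. -/
lemma aux_bwd (w v lam μ : ℂ) (hconj : conj μ = -lam*μ)
    (h : conj ((1/2:ℂ)*(w - Complex.I*v)) = lam*((1/2:ℂ)*(w+Complex.I*v))) :
    μ.re*w.re + μ.im*w.im = 0 ∧ μ.re*v.re + μ.im*v.im = 0 := by
  have hc : conj ((1/2:ℂ)*(w - Complex.I*v)) = (1/2:ℂ)*(conj w + Complex.I*conj v) := by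
    simp only [map_mul, map_sub, map_div₀, map_one, map_ofNat, Complex.conj_I]; ring
  rw [hc] at h
  have he : μ*(conj w + Complex.I*conj v) + conj μ*(w + Complex.I*v) = 0 := by
    linear_combination (2*μ)*h + (w+Complex.I*v)*hconj
  constructor
  · have := congrArg Complex.re he
    simp [mul_re, mul_im, Complex.add_re, Complex.add_im] at this
    linarith
  · have := congrArg Complex.im he
    simp [mul_re, mul_im, Complex.add_re, Complex.add_im] at this
    linarith

/-- For every unimodular `lam` there is `μ ≠ 0` with `conj μ = -lam * μ`. -/
lemma aux_mu (lam : ℂ) (hl : ‖lam‖ = 1) : ∃ μ : ℂ, μ ≠ 0 ∧ conj μ = -lam*μ := by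
  have h1 : lam.re*lam.re + lam.im*lam.im = 1 := by
    have h2 : ‖lam‖ ^ 2 = 1 := by rw [hl]; norm_num
    rw [Complex.sq_norm, Complex.normSq_apply] at h2; exact h2
  by_cases hre : lam.re = -1
  · have him : lam.im = 0 := by nlinarith
    exact ⟨1, one_ne_zero, by apply Complex.ext <;> simp [hre, him]⟩
  · refine ⟨(lam.im : ℂ) + (1 + lam.re)*Complex.I, ?_, ?_⟩
    · intro h0
      have := congrArg Complex.im h0
      simp at this
      exact hre (by linarith)
    · apply Complex.ext <;> simp [mul_re, mul_im] <;> nlinarith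

/-- for a smooth `f : ℂⁿ → ℂ` with real and imaginary parts `g`, `h`,
the real differentials `dg(z₀)`, `dh(z₀)` are ℝ-linearly dependent iff there is a
complex number `λ` with `|λ| = 1` such that `conj (∂f(z₀)) = λ • ∂̄f(z₀)`. -/
theorem mixed_critical_iff_exists_lambda {n : ℕ} (f : (Fin n → ℂ) → ℂ)
    (hf : ContDiff ℝ (⊤ : ℕ∞) f) (z₀ : Fin n → ℂ) :
    ¬ LinearIndependent ℝ
        ![fderiv ℝ (fun z => (f z).re) z₀, fderiv ℝ (fun z => (f z).im) z₀] ↔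
    ∃ lam : ℂ, ‖lam‖ = 1 ∧ ∀ i, conj (wD f z₀ i) = lam * wDbar f z₀ i := by
  have hd : DifferentiableAt ℝ f z₀ := (hf.differentiable (by simp)).differentiableAt
  have hre : fderiv ℝ (fun z => (f z).re) z₀ = Complex.reCLM.comp (fderiv ℝ f z₀) :=
    (Complex.reCLM.hasFDerivAt.comp z₀ hd.hasFDerivAt).fderiv
  have him : fderiv ℝ (fun z => (f z).im) z₀ = Complex.imCLM.comp (fderiv ℝ f z₀) :=
    (Complex.imCLM.hasFDerivAt.comp z₀ hd.hasFDerivAt).fderiv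
  set A := fderiv ℝ (fun z => (f z).re) z₀ with hA
  set B := fderiv ℝ (fun z => (f z).im) z₀ with hB
  have hAv : ∀ u, A u = (fderiv ℝ f z₀ u).re := fun u => by rw [hre]; rfl
  have hBv : ∀ u, B u = (fderiv ℝ f z₀ u).im := fun u => by rw [him]; rfl
  rw [LinearIndependent.pair_iff]
  push_neg
  constructor
  · rintro ⟨α, β, hsum, hne⟩
    have hμ : (α:ℂ) + β*Complex.I ≠ 0 := by
      intro h0
      have h1 : α = 0 := by simpa using congrArg Complex.re h0
      have h2 : β = 0 := by simpa using congrArg Complex.im h0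
      exact hne h1 h2
    refine ⟨-(conj ((α:ℂ)+β*Complex.I))/((α:ℂ)+β*Complex.I), ?_, fun i => ?_⟩
    · rw [norm_div, norm_neg, RCLike.norm_conj, div_self (norm_ne_zero_iff.2 hμ)]
    · have e1 := ContinuousLinearMap.ext_iff.1 hsum (Pi.single i 1)
      have e2 := ContinuousLinearMap.ext_iff.1 hsum (Pi.single i Complex.I)
      simp only [ContinuousLinearMap.add_apply, ContinuousLinearMap.coe_smul',
        Pi.smul_apply, smul_eq_mul, ContinuousLinearMap.zero_apply, hAv, hBv] at e1 e2
      exact aux_fwd _ _ α β hμ e1 e2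
  · rintro ⟨lam, hl, hcond⟩
    obtain ⟨μ, hμ0, hconj⟩ := aux_mu lam hl
    refine ⟨μ.re, μ.im, ?_, fun h1 h2 => hμ0 (Complex.ext h1 h2)⟩
    apply aux_ext
    · intro i
      have := (aux_bwd _ _ lam μ hconj (hcond i)).1
      simp only [ContinuousLinearMap.add_apply, ContinuousLinearMap.coe_smul',
        Pi.smul_apply, smul_eq_mul, hAv, hBv]
      exact this
    · intro i
      have := (aux_bwd _ _ lam μ hconj (hcond i)).2
      simp only [ContinuousLinearMap.add_apply, ContinuousLinearMap.coe_smul',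
        Pi.smul_apply, smul_eq_mul, hAv, hBv]
      exact this
end

section
/- Let f(z, z̄) be a mixed polynomial on ℂⁿ that is strongly non-degenerate, and let I ⊆ {1,…,n} be such that the restriction of f to ℂ^I is not identically zero. Then the restriction f|_{ℂ^I}, regarded as a mixed polynomial in the variables zᵢ, i ∈ I, is strongly non-degenerate. -/
open Complex ComplexConjugate Finset

/-- The value of the mixed polynomial `Σ_{(ν,μ)∈S} c_{ν,μ} z^ν z̄^μ`. -/
noncomputable def mval {n : ℕ} (S : Finset ((Fin n → ℕ) × (Fin n → ℕ)))
    (c : (Fin n → ℕ) × (Fin n → ℕ) → ℂ) (z : Fin n → ℂ) : ℂ :=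
  ∑ p ∈ S, c p * (∏ j, z j ^ p.1 j) * (∏ j, conj (z j) ^ p.2 j)

/-- The Wirtinger derivative `∂P/∂zᵢ` of the mixed polynomial. -/
noncomputable def mDz {n : ℕ} (S : Finset ((Fin n → ℕ) × (Fin n → ℕ)))
    (c : (Fin n → ℕ) × (Fin n → ℕ) → ℂ) (i : Fin n) (z : Fin n → ℂ) : ℂ :=
  ∑ p ∈ S, c p * (p.1 i : ℂ) * z i ^ (p.1 i - 1) *
    (∏ j ∈ Finset.univ.erase i, z j ^ p.1 j) * (∏ j, conj (z j) ^ p.2 j)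

/-- The Wirtinger derivative `∂P/∂z̄ᵢ` of the mixed polynomial. -/
noncomputable def mDzbar {n : ℕ} (S : Finset ((Fin n → ℕ) × (Fin n → ℕ)))
    (c : (Fin n → ℕ) × (Fin n → ℕ) → ℂ) (i : Fin n) (z : Fin n → ℂ) : ℂ :=
  ∑ p ∈ S, c p * (p.2 i : ℂ) * conj (z i) ^ (p.2 i - 1) *
    (∏ j ∈ Finset.univ.erase i, conj (z j) ^ p.2 j) * (∏ j, z j ^ p.1 j)


/-- Radial `w`-degree of a mixed monomial `z^ν z̄^μ`. -/
def degW {n : ℕ} (w : Fin n → ℕ) (p : (Fin n → ℕ) × (Fin n → ℕ)) : ℕ :=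
  ∑ i, w i * (p.1 i + p.2 i)

/-- The set of monomials lying on the face `Δ_w` of the Newton polygon:
those whose radial `w`-degree is minimal among the monomials of `S`. -/
def face {n : ℕ} (S : Finset ((Fin n → ℕ) × (Fin n → ℕ))) (w : Fin n → ℕ) :
    Finset ((Fin n → ℕ) × (Fin n → ℕ)) :=
  S.filter (fun p => ∀ q ∈ S, degW w p ≤ degW w q)

/-- Strong non-degeneracy of a mixed polynomial, regarded as a mixed polynomial in the
variables `zᵢ`, `i ∈ I`: for every weight vector `w` positive on `I` (so that `Δ_w` is a
compact face of the Newton boundary), the face function `f_{Δ_w}` has no mixed critical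
point on the torus `{zᵢ ≠ 0, i ∈ I}` of `ℂ^I`. -/
def StronglyNonDegenerateOn {n : ℕ} (I : Finset (Fin n))
    (S : Finset ((Fin n → ℕ) × (Fin n → ℕ)))
    (c : (Fin n → ℕ) × (Fin n → ℕ) → ℂ) : Prop :=
  ∀ w : Fin n → ℕ, (∀ i ∈ I, 0 < w i) →
    ∀ z : Fin n → ℂ, (∀ i ∈ I, z i ≠ 0) → (∀ i ∉ I, z i = 0) →
      ¬ ∃ lam : ℂ, ‖lam‖ = 1 ∧ ∀ i ∈ I,
          conj (mDz (face S w) c i z) = lam * mDzbar (face S w) c i z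

/-- if `f` is a strongly non-degenerate mixed polynomial and the
restriction `f|_{ℂ^I}` (the sum of the monomials of `f` involving only the variables
`zᵢ, z̄ᵢ`, `i ∈ I`) is not identically zero, then `f|_{ℂ^I}`, regarded as a mixed
polynomial in the variables `zᵢ`, `i ∈ I`, is strongly non-degenerate. -/
theorem restriction_strongly_nondegenerate {n : ℕ}
    (S : Finset ((Fin n → ℕ) × (Fin n → ℕ)))
    (c : (Fin n → ℕ) × (Fin n → ℕ) → ℂ)
    (hc : ∀ p ∈ S, c p ≠ 0)
    (hnd : StronglyNonDegenerateOn Finset.univ S c)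
    (I : Finset (Fin n))
    (hnv : ∃ z : Fin n → ℂ,
      mval (S.filter (fun p => ∀ i, i ∉ I → p.1 i = 0 ∧ p.2 i = 0)) c z ≠ 0) :
    StronglyNonDegenerateOn I
      (S.filter (fun p => ∀ i, i ∉ I → p.1 i = 0 ∧ p.2 i = 0)) c := by
  intro w hw z hz hz0
  rintro ⟨lam, hlam, heq⟩
  set T := S.filter (fun p => ∀ i, i ∉ I → p.1 i = 0 ∧ p.2 i = 0) with hT
  have hTS : T ⊆ S := Finset.filter_subset _ _
  have hTsupp : ∀ p ∈ T, ∀ i, i ∉ I → p.1 i = 0 ∧ p.2 i = 0 := by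
    intro p hp
    exact (Finset.mem_filter.mp hp).2
  have hTne : T.Nonempty := by
    by_contra h
    rw [Finset.not_nonempty_iff_eq_empty] at h
    obtain ⟨z0, hz0'⟩ := hnv
    rw [h] at hz0'
    simp [mval] at hz0'
  set B : ℕ := 1 + ∑ p ∈ T, degW w p with hBdef
  set w' : Fin n → ℕ := fun i => if i ∈ I then w i else B with hw'
  set z' : Fin n → ℂ := fun i => if i ∈ I then z i else 1 with hz'
  -- degrees agree on T
  have hdeg : ∀ p ∈ T, degW w' p = degW w p := by
    intro p hp
    unfold degW
    apply Finset.sum_congr rfl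
    intro i _
    by_cases hi : i ∈ I
    · simp [hw', hi]
    · have := hTsupp p hp i hi
      simp [hw', hi, this.1, this.2]
  have hB : ∀ p ∈ T, degW w p < B := by
    intro p hp
    have := Finset.single_le_sum (f := degW w) (fun q _ => Nat.zero_le _) hp
    omega
  have hoff : ∀ p ∈ S, p ∉ T → B ≤ degW w' p := by
    intro p hpS hpT
    rw [hT, Finset.mem_filter] at hpT
    push_neg at hpT
    obtain ⟨i, hiI, hi⟩ := hpT hpS
    have h1 : 1 ≤ p.1 i + p.2 i := by omega
    have h2 : w' i * (p.1 i + p.2 i) ≤ degW w' p := by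
      unfold degW
      exact Finset.single_le_sum (f := fun j => w' j * (p.1 j + p.2 j))
        (fun j _ => Nat.zero_le _) (Finset.mem_univ i)
    have h3 : w' i = B := by simp [hw', hiI]
    calc B = B * 1 := (Nat.mul_one B).symm
      _ ≤ w' i * (p.1 i + p.2 i) := by rw [h3]; exact Nat.mul_le_mul_left _ h1
      _ ≤ degW w' p := h2
  obtain ⟨m, hm⟩ := hTne
  have hface : face S w' = face T w := by
    ext p
    simp only [face, Finset.mem_filter]
    constructor
    · rintro ⟨hpS, hmin⟩
      have hpT : p ∈ T := by
        by_contra hpT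
        have h1 := hoff p hpS hpT
        have h2 := hmin m (hTS hm)
        rw [hdeg m hm] at h2
        have := hB m hm
        omega
      refine ⟨hpT, fun q hq => ?_⟩
      have := hmin q (hTS hq)
      rwa [hdeg p hpT, hdeg q hq] at this
    · rintro ⟨hpT, hmin⟩
      refine ⟨hTS hpT, fun q hq => ?_⟩
      by_cases hqT : q ∈ T
      · rw [hdeg p hpT, hdeg q hqT]
        exact hmin q hqT
      · have := hoff q hq hqT
        have := hB p hpT
        rw [hdeg p hpT]
        omega
  -- derivatives off I vanish
  have hDz0 : ∀ i, i ∉ I → mDz (face T w) c i z' = 0 := by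
    intro i hi
    unfold mDz
    apply Finset.sum_eq_zero
    intro p hp
    have hp' : p ∈ T := Finset.mem_of_mem_filter p hp
    have := (hTsupp p hp' i hi).1
    simp [this]
  have hDzbar0 : ∀ i, i ∉ I → mDzbar (face T w) c i z' = 0 := by
    intro i hi
    unfold mDzbar
    apply Finset.sum_eq_zero
    intro p hp
    have hp' : p ∈ T := Finset.mem_of_mem_filter p hp
    have := (hTsupp p hp' i hi).2
    simp [this]
  -- derivatives on I agree between z and z'
  have hprod1 : ∀ p ∈ face T w, ∀ i : Fin n,
      ∏ j ∈ Finset.univ.erase i, z' j ^ p.1 j = ∏ j ∈ Finset.univ.erase i, z j ^ p.1 j := by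
    intro p hp i
    apply Finset.prod_congr rfl
    intro j _
    by_cases hj : j ∈ I
    · simp [hz', hj]
    · have := (hTsupp p (Finset.mem_of_mem_filter p hp) j hj).1
      simp [this]
  have hprod2 : ∀ p ∈ face T w, ∀ i : Fin n,
      ∏ j ∈ Finset.univ.erase i, conj (z' j) ^ p.2 j
        = ∏ j ∈ Finset.univ.erase i, conj (z j) ^ p.2 j := by
    intro p hp i
    apply Finset.prod_congr rfl
    intro j _
    by_cases hj : j ∈ I
    · simp [hz', hj]
    · have := (hTsupp p (Finset.mem_of_mem_filter p hp) j hj).2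
      simp [this]
  have hprod3 : ∀ p ∈ face T w, ∏ j, z' j ^ p.1 j = ∏ j, z j ^ p.1 j := by
    intro p hp
    apply Finset.prod_congr rfl
    intro j _
    by_cases hj : j ∈ I
    · simp [hz', hj]
    · have := (hTsupp p (Finset.mem_of_mem_filter p hp) j hj).1
      simp [this]
  have hprod4 : ∀ p ∈ face T w, ∏ j, conj (z' j) ^ p.2 j = ∏ j, conj (z j) ^ p.2 j := by
    intro p hp
    apply Finset.prod_congr rfl
    intro j _
    by_cases hj : j ∈ I
    · simp [hz', hj]
    · have := (hTsupp p (Finset.mem_of_mem_filter p hp) j hj).2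
      simp [this]
  have hDzI : ∀ i ∈ I, mDz (face T w) c i z' = mDz (face T w) c i z := by
    intro i hi
    unfold mDz
    apply Finset.sum_congr rfl
    intro p hp
    rw [hprod1 p hp i, hprod4 p hp]
    have : z' i = z i := by simp [hz', hi]
    rw [this]
  have hDzbarI : ∀ i ∈ I, mDzbar (face T w) c i z' = mDzbar (face T w) c i z := by
    intro i hi
    unfold mDzbar
    apply Finset.sum_congr rfl
    intro p hp
    rw [hprod2 p hp i, hprod3 p hp]
    have : z' i = z i := by simp [hz', hi]
    rw [this]
  -- apply global non-degeneracy
  refine hnd w' ?_ z' ?_ (by simp) ⟨lam, hlam, ?_⟩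
  · intro i _
    by_cases hi : i ∈ I
    · simpa [hw', hi] using hw i hi
    · have : 0 < B := by omega
      simpa [hw', hi] using this
  · intro i _
    by_cases hi : i ∈ I
    · simpa [hz', hi] using hz i hi
    · simp [hz', hi]
  · intro i _
    rw [hface]
    by_cases hi : i ∈ I
    · rw [hDzI i hi, hDzbarI i hi]
      exact heq i hi
    · rw [hDz0 i hi, hDzbar0 i hi]
      simp
end

section
/- Let g, h : ℝ^N → ℝ^{2n} be functions of a real parameter s admitting convergent expansions v_g(s) = G s^{o_g} + o(s^{o_g}) and v_h(s) = H s^{o_h} + o(s^{o_h}) with G, H ∈ ℝ^{2n} \ {0} and o_g, o_h ∈ ℤ. If G and H are linearly independent over ℝ, then the limit as s → 0 (s ≠ 0) of the orthogonal complement (span_ℝ{v_g(s), v_h(s)})^⊥ (a codimension-2 subspace of ℝ^{2n} for small s ≠ 0) exists in the Grassmannian and equals (span_ℝ{G, H})^⊥ = G^⊥ ∩ H^⊥. -/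
/-!
Orthogonality to `v_g(s)` and `v_h(s)` is unchanged by rescaling them to `s^{-o_g} v_g(s) → G`
and `s^{-o_h} v_h(s) → H`, so it passes to limits. Conversely, a vector `L ⊥ G, H` is the limit
of `L` minus its orthogonal projection onto the span of the rescaled vectors: by Cramer's rule
this projection is a rational function of inner products whose denominator, the Gram
determinant, tends to the nonzero Gram determinant of the independent pair `G, H`.
-/

open Filter Topology RealInnerProductSpace

section

variable {E : Type*} [NormedAddCommGroup E] [InnerProductSpace ℝ E]

noncomputable def gramDet (x y : E) : ℝ := ⟪x, x⟫ * ⟪y, y⟫ - ⟪x, y⟫ ^ 2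

theorem gramDet_ne_zero {x y : E} (h : LinearIndependent ℝ ![x, y]) : gramDet x y ≠ 0 := by
  have := Matrix.det_gram_ne_zero_iff_linearIndependent.mpr h
  simpa [Matrix.det_fin_two, gramDet, real_inner_comm x y, sq] using this

theorem continuous_gramDet : Continuous fun p : E × E => gramDet p.1 p.2 := by
  unfold gramDet
  fun_prop

/-- `v` minus its orthogonal projection onto `span {x, y}` (when `gramDet x y ≠ 0`), the
coefficients of the projection being given by Cramer's rule. -/
noncomputable def orthogonalCorrection (x y v : E) : E :=
  v - ((⟪y, y⟫ * ⟪x, v⟫ - ⟪x, y⟫ * ⟪y, v⟫) / gramDet x y) • x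
    - ((⟪x, x⟫ * ⟪y, v⟫ - ⟪x, y⟫ * ⟪x, v⟫) / gramDet x y) • y

theorem inner_orthogonalCorrection_left {x y : E} (v : E) (h : gramDet x y ≠ 0) :
    ⟪x, orthogonalCorrection x y v⟫ = 0 := by
  simp only [orthogonalCorrection, inner_sub_right, real_inner_smul_right]
  field_simp
  unfold gramDet
  ring

theorem inner_orthogonalCorrection_right {x y : E} (v : E) (h : gramDet x y ≠ 0) :
    ⟪y, orthogonalCorrection x y v⟫ = 0 := by
  simp only [orthogonalCorrection, inner_sub_right, real_inner_smul_right, real_inner_comm x y]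
  field_simp
  unfold gramDet
  ring

theorem orthogonalCorrection_of_inner_eq_zero {x y v : E} (hx : ⟪x, v⟫ = 0) (hy : ⟪y, v⟫ = 0) :
    orthogonalCorrection x y v = v := by
  simp [orthogonalCorrection, hx, hy]

theorem continuousAt_orthogonalCorrection {x y : E} (v : E) (h : gramDet x y ≠ 0) :
    ContinuousAt (fun p : E × E => orthogonalCorrection p.1 p.2 v) (x, y) := by
  unfold orthogonalCorrection gramDet
  fun_prop (disch := exact h)

theorem inner_eq_zero_of_inner_inv_smul_eq_zero {c : ℝ} {u v : E} (hc : c ≠ 0)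
    (h : ⟪c⁻¹ • v, u⟫ = 0) : ⟪u, v⟫ = 0 := by
  rw [real_inner_smul_left, mul_eq_zero, real_inner_comm] at h
  exact h.resolve_left (inv_ne_zero hc)

variable {α : Type*} {l : Filter α}

theorem inner_eq_zero_of_tendsto [l.NeBot] {u v : α → E} {c : α → ℝ} {L W : E}
    (hu : Tendsto u l (𝓝 L)) (hv : Tendsto (fun s => (c s)⁻¹ • v s) l (𝓝 W))
    (huv : ∀ᶠ s in l, ⟪u s, v s⟫ = 0) : ⟪L, W⟫ = 0 := by
  refine tendsto_nhds_unique (hu.inner hv) (tendsto_const_nhds.congr' ?_)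
  filter_upwards [huv] with s hs
  rw [real_inner_smul_right, hs, mul_zero]

theorem exists_tendsto_forall_inner_eq_zero {x y : α → E} {c d : α → ℝ} {a b L : E}
    (hx : Tendsto (fun s => (c s)⁻¹ • x s) l (𝓝 a))
    (hy : Tendsto (fun s => (d s)⁻¹ • y s) l (𝓝 b)) (hab : LinearIndependent ℝ ![a, b])
    (hc : ∀ᶠ s in l, c s ≠ 0) (hd : ∀ᶠ s in l, d s ≠ 0) (hLa : ⟪L, a⟫ = 0) (hLb : ⟪L, b⟫ = 0) :
    ∃ u : α → E, Tendsto u l (𝓝 L) ∧ ∀ᶠ s in l, ⟪u s, x s⟫ = 0 ∧ ⟪u s, y s⟫ = 0 := by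
  have hxy := hx.prodMk_nhds hy
  have hgram : gramDet a b ≠ 0 := gramDet_ne_zero hab
  refine ⟨fun s => orthogonalCorrection ((c s)⁻¹ • x s) ((d s)⁻¹ • y s) L, ?_, ?_⟩
  · have := (continuousAt_orthogonalCorrection L hgram).tendsto.comp hxy
    rwa [orthogonalCorrection_of_inner_eq_zero (by rwa [real_inner_comm])
      (by rwa [real_inner_comm])] at this
  · have hgram_ne := hxy.eventually (continuous_gramDet.continuousAt.eventually_ne hgram)
    filter_upwards [hc, hd, hgram_ne] with s hcs hds hs
    exact ⟨inner_eq_zero_of_inner_inv_smul_eq_zero hcs (inner_orthogonalCorrection_left L hs),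
      inner_eq_zero_of_inner_inv_smul_eq_zero hds (inner_orthogonalCorrection_right L hs)⟩

end

theorem limit_orthogonal_complements_general {n : ℕ}
    (vg vh : ℝ → EuclideanSpace ℝ (Fin (2 * n)))
    (G H : EuclideanSpace ℝ (Fin (2 * n)))
    (hGH : LinearIndependent ℝ ![G, H]) (og oh : ℤ)
    (hvg : Tendsto (fun s : ℝ => (s ^ og)⁻¹ • vg s) (𝓝[≠] (0 : ℝ)) (𝓝 G))
    (hvh : Tendsto (fun s : ℝ => (s ^ oh)⁻¹ • vh s) (𝓝[≠] (0 : ℝ)) (𝓝 H)) :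
    (∀ u : ℝ → EuclideanSpace ℝ (Fin (2 * n)),
      (∀ᶠ s in 𝓝[≠] (0 : ℝ),
        inner ℝ (u s) (vg s) = 0 ∧ inner ℝ (u s) (vh s) = 0) →
      ∀ L, Tendsto u (𝓝[≠] (0 : ℝ)) (𝓝 L) →
        inner ℝ L G = 0 ∧ inner ℝ L H = 0) ∧
    (∀ L : EuclideanSpace ℝ (Fin (2 * n)),
      inner ℝ L G = 0 → inner ℝ L H = 0 →
      ∃ u : ℝ → EuclideanSpace ℝ (Fin (2 * n)),
        Tendsto u (𝓝[≠] (0 : ℝ)) (𝓝 L) ∧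
        ∀ᶠ s in 𝓝[≠] (0 : ℝ),
          inner ℝ (u s) (vg s) = 0 ∧ inner ℝ (u s) (vh s) = 0) := by
  have hzpow : ∀ o : ℤ, ∀ᶠ s in 𝓝[≠] (0 : ℝ), s ^ o ≠ 0 := fun o =>
    eventually_mem_nhdsWithin.mono fun s hs => zpow_ne_zero o hs
  refine ⟨fun u hu L hL => ⟨?_, ?_⟩, fun L hLG hLH => ?_⟩
  · exact inner_eq_zero_of_tendsto hL hvg (hu.mono fun s hs => hs.1)
  · exact inner_eq_zero_of_tendsto hL hvh (hu.mono fun s hs => hs.2)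
  · exact exists_tendsto_forall_inner_eq_zero hvg hvh hGH (hzpow og) (hzpow oh) hLG hLH

/-- if `v_g(s) = G s^{o_g} + o(s^{o_g})` and `v_h(s) = H s^{o_h} + o(s^{o_h})`
with `G, H` linearly independent over `ℝ`, then the orthogonal complements
`span{v_g(s), v_h(s)}^⊥` converge (in the Kuratowski sense, which is convergence in the
Grassmannian of codimension-2 subspaces) to `span{G, H}^⊥ = G^⊥ ∩ H^⊥`:
(1) any limit of a curve of vectors orthogonal to `v_g(s)` and `v_h(s)` is orthogonal to
`G` and `H`; and (2) any vector orthogonal to `G` and `H` is such a limit. -/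
theorem limit_orthogonal_complements {n : ℕ}
    (vg vh : ℝ → EuclideanSpace ℝ (Fin (2 * n)))
    (G H : EuclideanSpace ℝ (Fin (2 * n))) (hG : G ≠ 0) (hH : H ≠ 0)
    (hGH : LinearIndependent ℝ ![G, H]) (og oh : ℤ)
    (hvg : Tendsto (fun s : ℝ => (s ^ og)⁻¹ • vg s) (𝓝[≠] (0 : ℝ)) (𝓝 G))
    (hvh : Tendsto (fun s : ℝ => (s ^ oh)⁻¹ • vh s) (𝓝[≠] (0 : ℝ)) (𝓝 H)) :
    (∀ u : ℝ → EuclideanSpace ℝ (Fin (2 * n)),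
      (∀ᶠ s in 𝓝[≠] (0 : ℝ),
        inner ℝ (u s) (vg s) = 0 ∧ inner ℝ (u s) (vh s) = 0) →
      ∀ L, Tendsto u (𝓝[≠] (0 : ℝ)) (𝓝 L) →
        inner ℝ L G = 0 ∧ inner ℝ L H = 0) ∧
    (∀ L : EuclideanSpace ℝ (Fin (2 * n)),
      inner ℝ L G = 0 → inner ℝ L H = 0 →
      ∃ u : ℝ → EuclideanSpace ℝ (Fin (2 * n)),
        Tendsto u (𝓝[≠] (0 : ℝ)) (𝓝 L) ∧
        ∀ᶠ s in 𝓝[≠] (0 : ℝ),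
          inner ℝ (u s) (vg s) = 0 ∧ inner ℝ (u s) (vh s) = 0) :=
  limit_orthogonal_complements_general vg vh G H hGH og oh hvg hvh
end
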